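/- For probability measures u and v on an interval Ω ⊆ ℝ with finite second moments, the L²-Wasserstein distance satisfies W₂(u,v) = ‖icdf_u − icdf_v‖_{L²([0,1])}, where icdf_u is the generalized inverse (quantile function) of the cumulative distribution function of u. -/

import Mathlib

/-! The quantile map `icdf μ` pushes Lebesgue measure on `(0, 1)` forward to `μ`, so
`s ↦ (icdf u s, icdf v s)` pushes it forward to a coupling of `u` and `v` (the comonotone one)
whose cost is the right-hand side. This coupling is optimal: for a lower bound `a` of both
supports write `(x - y)² = (x - a)² + (y - a)² - 2 (x - a) (y - a)`; the first two terms only see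
the marginals, and by the layer-cake formula the cross term is
`∫∫_{s, t > a} π ((s, ∞) × (t, ∞))`, where `π ((s, ∞) × (t, ∞)) ≤ min (u (s, ∞)) (v (t, ∞))`
with equality for the comonotone coupling. -/

open MeasureTheory Set

/-- Cumulative distribution function of a measure on ℝ. -/
noncomputable def cdf' (μ : Measure ℝ) (x : ℝ) : ℝ := (μ (Iic x)).toReal

/-- Generalized inverse of the cdf (quantile function): icdf_μ(s) = inf{x : cdf_μ(x) > s}. -/
noncomputable def icdf (μ : Measure ℝ) (s : ℝ) : ℝ := sInf {x | s < cdf' μ x}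

/-- The L²-Wasserstein distance, defined as the infimum over couplings. -/
noncomputable def W2 (μ ν : Measure ℝ) : ℝ :=
  sInf {r | ∃ π : Measure (ℝ × ℝ), IsProbabilityMeasure π ∧
    π.map Prod.fst = μ ∧ π.map Prod.snd = ν ∧
    r = (∫ p, (p.1 - p.2) ^ 2 ∂π) ^ (1 / 2 : ℝ)}

lemma volume_eq_of_Ioo_subset_of_subset_Icc {a b : ℝ} {S : Set ℝ} (h₁ : Ioo a b ⊆ S)
    (h₂ : S ⊆ Icc a b) : volume S = ENNReal.ofReal (b - a) :=
  le_antisymm (Real.volume_Icc ▸ measure_mono h₂) (Real.volume_Ioo ▸ measure_mono h₁)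

lemma Continuous.integrable_of_ae_mem_isCompact {X : Type*} [TopologicalSpace X]
    [T2Space X] [MeasurableSpace X] [OpensMeasurableSpace X] {ρ : Measure X} [IsFiniteMeasure ρ]
    {K : Set X} (hK : IsCompact K) (hρ : ∀ᵐ x ∂ρ, x ∈ K) {f : X → ℝ} (hf : Continuous f) :
    Integrable f ρ := by
  rw [← Measure.restrict_eq_self_of_ae_mem hρ]
  exact hf.continuousOn.integrableOn_compact hK

theorem lintegral_ofReal_sub_mul_ofReal_sub (ρ : Measure (ℝ × ℝ)) [SFinite ρ] (a b : ℝ) :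
    ∫⁻ p, ENNReal.ofReal (p.1 - a) * ENNReal.ofReal (p.2 - b) ∂ρ =
      ∫⁻ q in Ioi a ×ˢ Ioi b, ρ (Ioi q.1 ×ˢ Ioi q.2) := by
  set E : Set ((ℝ × ℝ) × (ℝ × ℝ)) := {z | z.2.1 < z.1.1} ∩ {z | z.2.2 < z.1.2}
  have hE : MeasurableSet E :=
    (measurableSet_lt (by fun_prop) (by fun_prop)).inter
      (measurableSet_lt (by fun_prop) (by fun_prop))
  -- Tonelli: both sides are the `ρ ⊗ volume` measure of `{(p, q) | a < q < p}`.
  calc ∫⁻ p, ENNReal.ofReal (p.1 - a) * ENNReal.ofReal (p.2 - b) ∂ρ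
      = ∫⁻ p, volume.restrict (Ioi a ×ˢ Ioi b) (Prod.mk p ⁻¹' E) ∂ρ := by
        refine lintegral_congr fun p => ?_
        rw [Measure.restrict_apply' (measurableSet_Ioi.prod measurableSet_Ioi)]
        have : Prod.mk p ⁻¹' E ∩ Ioi a ×ˢ Ioi b = Ioo a p.1 ×ˢ Ioo b p.2 := by
          ext q
          simp only [E, mem_inter_iff, mem_preimage, mem_ofPred_eq, mem_prod, mem_Ioi, mem_Ioo]
          tauto
        rw [this, Measure.volume_eq_prod, Measure.prod_prod, Real.volume_Ioo, Real.volume_Ioo]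
    _ = ρ.prod (volume.restrict (Ioi a ×ˢ Ioi b)) E := (Measure.prod_apply hE).symm
    _ = ∫⁻ q in Ioi a ×ˢ Ioi b, ρ (Ioi q.1 ×ˢ Ioi q.2) := Measure.prod_apply_symm hE

lemma measure_prod_le_min_of_map {μ ν : Measure ℝ} {π : Measure (ℝ × ℝ)}
    (h₁ : π.map Prod.fst = μ) (h₂ : π.map Prod.snd = ν) (A B : Set ℝ) :
    π (A ×ˢ B) ≤ min (μ A) (ν B) :=
  le_min ((measure_mono fun _ hp => hp.1).trans (h₁ ▸ Measure.le_map_apply (by fun_prop) A))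
    ((measure_mono fun _ hp => hp.2).trans (h₂ ▸ Measure.le_map_apply (by fun_prop) B))

lemma ae_mem_prod_of_map {μ ν : Measure ℝ} {π : Measure (ℝ × ℝ)}
    (h₁ : π.map Prod.fst = μ) (h₂ : π.map Prod.snd = ν) {A B : Set ℝ}
    (hμ : ∀ᵐ x ∂μ, x ∈ A) (hν : ∀ᵐ y ∂ν, y ∈ B) : ∀ᵐ p ∂π, p ∈ A ×ˢ B := by
  filter_upwards [ae_of_ae_map (by fun_prop) (h₁ ▸ hμ), ae_of_ae_map (by fun_prop) (h₂ ▸ hν)]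
    with p hp₁ hp₂ using ⟨hp₁, hp₂⟩

lemma cdf'_nonneg (μ : Measure ℝ) (x : ℝ) : 0 ≤ cdf' μ x := ENNReal.toReal_nonneg

section Quantile

variable {μ : Measure ℝ} [IsProbabilityMeasure μ] {s x : ℝ}

lemma cdf'_eq_cdf : cdf' μ = ProbabilityTheory.cdf μ :=
  funext fun x => (ProbabilityTheory.cdf_eq_real μ x).symm

lemma monotone_cdf' : Monotone (cdf' μ) :=
  cdf'_eq_cdf (μ := μ) ▸ ProbabilityTheory.monotone_cdf μ

lemma cdf'_le_one (x : ℝ) : cdf' μ x ≤ 1 :=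
  cdf'_eq_cdf (μ := μ) ▸ ProbabilityTheory.cdf_le_one μ x

lemma measure_Ioi_eq_ofReal_one_sub_cdf' (x : ℝ) :
    μ (Ioi x) = ENNReal.ofReal (1 - cdf' μ x) := by
  rw [← compl_Iic, ← ofReal_measureReal, probReal_compl_eq_one_sub measurableSet_Iic]
  rfl

lemma bddBelow_setOf_lt_cdf' (hs : 0 < s) : BddBelow {x | s < cdf' μ x} := by
  obtain ⟨x₀, hx₀⟩ := ((cdf'_eq_cdf (μ := μ) ▸ ProbabilityTheory.tendsto_cdf_atBot μ).eventually
    (gt_mem_nhds hs)).exists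
  exact ⟨x₀, fun x hx => not_lt.1 fun hxx₀ => lt_asymm (hx.trans_le (monotone_cdf' hxx₀.le)) hx₀⟩

lemma nonempty_setOf_lt_cdf' (hs : s < 1) : {x | s < cdf' μ x}.Nonempty :=
  ((cdf'_eq_cdf (μ := μ) ▸ ProbabilityTheory.tendsto_cdf_atTop μ).eventually
    (lt_mem_nhds hs)).exists

lemma icdf_le_of_lt_cdf' (hs : 0 < s) (h : s < cdf' μ x) : icdf μ s ≤ x :=
  csInf_le (bddBelow_setOf_lt_cdf' hs) h

lemma lt_icdf_of_cdf'_lt (hs : s < 1) (h : cdf' μ x < s) : x < icdf μ s := by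
  have hcont : ContinuousWithinAt (cdf' μ) (Ioi x) x :=
    (cdf'_eq_cdf (μ := μ) ▸ (ProbabilityTheory.cdf μ).right_continuous x).mono Ioi_subset_Ici_self
  obtain ⟨y, hys, hxy⟩ := ((hcont.eventually (gt_mem_nhds h)).and self_mem_nhdsWithin).exists
  refine hxy.trans_le (le_csInf (nonempty_setOf_lt_cdf' hs) fun z hz => not_lt.1 fun hzy => ?_)
  exact lt_asymm (hz.trans_le (monotone_cdf' hzy.le)) hys

lemma monotoneOn_icdf : MonotoneOn (icdf μ) (Ioo 0 1) := fun _ hs₁ _ hs₂ hs =>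
  csInf_le_csInf (bddBelow_setOf_lt_cdf' hs₁.1) (nonempty_setOf_lt_cdf' hs₂.2)
    fun _ hx => hs.trans_lt hx

lemma aemeasurable_icdf : AEMeasurable (icdf μ) (volume.restrict (Ioo 0 1)) :=
  aemeasurable_restrict_of_monotoneOn measurableSet_Ioo monotoneOn_icdf

theorem map_icdf : (volume.restrict (Ioo 0 1)).map (icdf μ) = μ := by
  refine (Measure.ext_of_Iic μ _ fun x => ?_).symm
  rw [Measure.map_apply_of_aemeasurable aemeasurable_icdf measurableSet_Iic,
    Measure.restrict_apply' measurableSet_Ioo, ← ofReal_measureReal (μ := μ),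
    ← sub_zero (μ.real _)]
  refine (volume_eq_of_Ioo_subset_of_subset_Icc ?_ ?_).symm
  · intro σ hσ
    exact ⟨icdf_le_of_lt_cdf' hσ.1 hσ.2, hσ.1, hσ.2.trans_le (cdf'_le_one x)⟩
  · intro σ ⟨hσx, hσ⟩
    exact ⟨hσ.1.le, not_lt.1 fun h => (lt_icdf_of_cdf'_lt hσ.2 h).not_ge hσx⟩

end Quantile

noncomputable def quantileCoupling (μ ν : Measure ℝ) : Measure (ℝ × ℝ) :=
  (volume.restrict (Ioo 0 1)).map fun s => (icdf μ s, icdf ν s)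

section QuantileCoupling

variable {μ ν : Measure ℝ} [IsProbabilityMeasure μ] [IsProbabilityMeasure ν]

lemma aemeasurable_icdf_prodMk_icdf :
    AEMeasurable (fun s => (icdf μ s, icdf ν s)) (volume.restrict (Ioo 0 1)) :=
  aemeasurable_icdf.prodMk aemeasurable_icdf

lemma map_fst_quantileCoupling : (quantileCoupling μ ν).map Prod.fst = μ := by
  rw [quantileCoupling, AEMeasurable.map_map_of_aemeasurable (by fun_prop)
    aemeasurable_icdf_prodMk_icdf]
  exact map_icdf

lemma map_snd_quantileCoupling : (quantileCoupling μ ν).map Prod.snd = ν := by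
  rw [quantileCoupling, AEMeasurable.map_map_of_aemeasurable (by fun_prop)
    aemeasurable_icdf_prodMk_icdf]
  exact map_icdf

instance isProbabilityMeasure_quantileCoupling :
    IsProbabilityMeasure (quantileCoupling μ ν) := by
  have : IsProbabilityMeasure ((quantileCoupling μ ν).map Prod.fst) := by
    rw [map_fst_quantileCoupling]; infer_instance
  exact Measure.isProbabilityMeasure_of_map Prod.fst

lemma quantileCoupling_Ioi_prod_Ioi (x y : ℝ) :
    quantileCoupling μ ν (Ioi x ×ˢ Ioi y) = min (μ (Ioi x)) (ν (Ioi y)) := by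
  rw [quantileCoupling, Measure.map_apply_of_aemeasurable aemeasurable_icdf_prodMk_icdf
      (measurableSet_Ioi.prod measurableSet_Ioi), Measure.restrict_apply' measurableSet_Ioo,
    measure_Ioi_eq_ofReal_one_sub_cdf', measure_Ioi_eq_ofReal_one_sub_cdf', ← ENNReal.ofReal_min,
    min_sub_sub_left]
  refine volume_eq_of_Ioo_subset_of_subset_Icc ?_ ?_
  · intro σ ⟨hmσ, hσ1⟩
    have hσ : σ ∈ Ioo 0 1 := ⟨(cdf'_nonneg μ x).trans_lt ((le_max_left _ _).trans_lt hmσ), hσ1⟩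
    exact ⟨⟨lt_icdf_of_cdf'_lt hσ1 ((le_max_left _ _).trans_lt hmσ),
      lt_icdf_of_cdf'_lt hσ1 ((le_max_right _ _).trans_lt hmσ)⟩, hσ⟩
  · intro σ ⟨⟨hxσ, hyσ⟩, hσ⟩
    refine ⟨max_le ?_ ?_, hσ.2.le⟩
    · exact not_lt.1 fun h => (icdf_le_of_lt_cdf' hσ.1 h).not_gt hxσ
    · exact not_lt.1 fun h => (icdf_le_of_lt_cdf' hσ.1 h).not_gt hyσ

lemma integral_sq_sub_quantileCoupling :
    ∫ p, (p.1 - p.2) ^ 2 ∂(quantileCoupling μ ν) =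
      ∫ s in Ioo (0 : ℝ) 1, (icdf μ s - icdf ν s) ^ 2 :=
  integral_map aemeasurable_icdf_prodMk_icdf (by fun_prop)

end QuantileCoupling

section Couplings

variable {μ ν : Measure ℝ} {π : Measure (ℝ × ℝ)} [IsFiniteMeasure π] {a b : ℝ}

lemma ofReal_integral_sub_mul_sub (hπ : ∀ᵐ p ∂π, p ∈ Icc a b ×ˢ Icc a b) :
    ENNReal.ofReal (∫ p, (p.1 - a) * (p.2 - a) ∂π) =
      ∫⁻ q in Ioi a ×ˢ Ioi a, π (Ioi q.1 ×ˢ Ioi q.2) := by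
  have hnonneg : ∀ᵐ p ∂π, 0 ≤ p.1 - a ∧ 0 ≤ p.2 - a := by
    filter_upwards [hπ] with p hp using ⟨sub_nonneg.2 hp.1.1, sub_nonneg.2 hp.2.1⟩
  rw [← lintegral_ofReal_sub_mul_ofReal_sub, ofReal_integral_eq_lintegral_ofReal
    (Continuous.integrable_of_ae_mem_isCompact (isCompact_Icc.prod isCompact_Icc) hπ
      (by fun_prop))
    (hnonneg.mono fun p hp => mul_nonneg hp.1 hp.2)]
  exact lintegral_congr_ae (hnonneg.mono fun p hp => ENNReal.ofReal_mul hp.1)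

lemma integral_sq_sub_eq (h₁ : π.map Prod.fst = μ) (h₂ : π.map Prod.snd = ν)
    (hπ : ∀ᵐ p ∂π, p ∈ Icc a b ×ˢ Icc a b) :
    ∫ p, (p.1 - p.2) ^ 2 ∂π =
      ∫ x, (x - a) ^ 2 ∂μ + ∫ y, (y - a) ^ 2 ∂ν - 2 * ∫ p, (p.1 - a) * (p.2 - a) ∂π := by
  have hint {f : ℝ × ℝ → ℝ} (hf : Continuous f) : Integrable f π :=
    Continuous.integrable_of_ae_mem_isCompact (isCompact_Icc.prod isCompact_Icc) hπ hf
  calc ∫ p, (p.1 - p.2) ^ 2 ∂π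
      = ∫ p, ((p.1 - a) ^ 2 + (p.2 - a) ^ 2 - 2 * ((p.1 - a) * (p.2 - a))) ∂π := by
        congr 1 with p; ring
    _ = ∫ p, (p.1 - a) ^ 2 ∂π + ∫ p, (p.2 - a) ^ 2 ∂π - 2 * ∫ p, (p.1 - a) * (p.2 - a) ∂π := by
        rw [integral_sub (hint (f := fun p => (p.1 - a) ^ 2 + (p.2 - a) ^ 2) (by fun_prop))
            (hint (by fun_prop)),
          integral_add (hint (by fun_prop)) (hint (by fun_prop)), integral_const_mul]
    _ = _ := by
        rw [← h₁, ← h₂, integral_map (by fun_prop) (by fun_prop),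
          integral_map (by fun_prop) (by fun_prop)]

variable [IsProbabilityMeasure μ] [IsProbabilityMeasure ν]

lemma integral_sub_mul_sub_le_quantileCoupling (h₁ : π.map Prod.fst = μ)
    (h₂ : π.map Prod.snd = ν) (hμ : ∀ᵐ x ∂μ, x ∈ Icc a b) (hν : ∀ᵐ y ∂ν, y ∈ Icc a b) :
    ∫ p, (p.1 - a) * (p.2 - a) ∂π ≤ ∫ p, (p.1 - a) * (p.2 - a) ∂(quantileCoupling μ ν) := by
  have hπ₀ := ae_mem_prod_of_map map_fst_quantileCoupling map_snd_quantileCoupling hμ hν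
  have hnonneg : 0 ≤ ∫ p, (p.1 - a) * (p.2 - a) ∂(quantileCoupling μ ν) :=
    integral_nonneg_of_ae <| hπ₀.mono fun p hp =>
      mul_nonneg (sub_nonneg.2 hp.1.1) (sub_nonneg.2 hp.2.1)
  rw [← ENNReal.ofReal_le_ofReal_iff hnonneg,
    ofReal_integral_sub_mul_sub (ae_mem_prod_of_map h₁ h₂ hμ hν), ofReal_integral_sub_mul_sub hπ₀]
  exact lintegral_mono fun q =>
    (measure_prod_le_min_of_map h₁ h₂ _ _).trans_eq (quantileCoupling_Ioi_prod_Ioi _ _).symm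

theorem integral_sq_sub_quantileCoupling_le (h₁ : π.map Prod.fst = μ)
    (h₂ : π.map Prod.snd = ν) (hμ : ∀ᵐ x ∂μ, x ∈ Icc a b) (hν : ∀ᵐ y ∂ν, y ∈ Icc a b) :
    ∫ p, (p.1 - p.2) ^ 2 ∂(quantileCoupling μ ν) ≤ ∫ p, (p.1 - p.2) ^ 2 ∂π := by
  rw [integral_sq_sub_eq map_fst_quantileCoupling map_snd_quantileCoupling
      (ae_mem_prod_of_map map_fst_quantileCoupling map_snd_quantileCoupling hμ hν),
    integral_sq_sub_eq h₁ h₂ (ae_mem_prod_of_map h₁ h₂ hμ hν)]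
  linarith [integral_sub_mul_sub_le_quantileCoupling h₁ h₂ hμ hν]

end Couplings

theorem stmt0_general (xmin xmax : ℝ) (u v : Measure ℝ)
    (hu : IsProbabilityMeasure u) (hv : IsProbabilityMeasure v)
    (huΩ : ∀ᵐ x ∂u, x ∈ Icc xmin xmax) (hvΩ : ∀ᵐ x ∂v, x ∈ Icc xmin xmax) :
    W2 u v = (∫ s in Ioo (0 : ℝ) 1, (icdf u s - icdf v s) ^ 2) ^ (1 / 2 : ℝ) := by
  rw [← integral_sq_sub_quantileCoupling]
  refine IsLeast.csInf_eq ⟨⟨quantileCoupling u v, inferInstance, map_fst_quantileCoupling,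
    map_snd_quantileCoupling, rfl⟩, ?_⟩
  rintro r ⟨π, hπ, h₁, h₂, rfl⟩
  exact Real.rpow_le_rpow (integral_nonneg fun _ => sq_nonneg _)
    (integral_sq_sub_quantileCoupling_le h₁ h₂ huΩ hvΩ) (by norm_num)

theorem stmt0 (xmin xmax : ℝ) (hx : xmin < xmax) (u v : Measure ℝ)
    (hu : IsProbabilityMeasure u) (hv : IsProbabilityMeasure v)
    (huΩ : ∀ᵐ x ∂u, x ∈ Icc xmin xmax) (hvΩ : ∀ᵐ x ∂v, x ∈ Icc xmin xmax)
    (hu2 : Integrable (fun x => x ^ 2) u) (hv2 : Integrable (fun x => x ^ 2) v) :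
    W2 u v = (∫ s in Ioo (0 : ℝ) 1, (icdf u s - icdf v s) ^ 2) ^ (1 / 2 : ℝ) :=
  stmt0_general xmin xmax u v hu hv huΩ hvΩ
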